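/- arXiv:2105.07868 — 4 statements merged into one kernel-verified Lean document; each statement's English description precedes it below -/
import Mathlib

section
/- If X ⊆ S^{n-1}(r) is a spherical 4-design and H is a symmetric traceless n×n real matrix, then ∑_{x ∈ X} (xᵀ H x)² = (2 r⁴ |X| / (n(n+2))) · Tr(H²). -/
open MvPolynomial

/-- The Laplacian of a multivariate polynomial. -/
noncomputable def mvLaplacian {n : ℕ} (p : MvPolynomial (Fin n) ℝ) : MvPolynomial (Fin n) ℝ :=
  ∑ i, pderiv i (pderiv i p)

/-- `X` is a spherical `t`-design on the sphere of radius `r` in `ℝ^n`: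
all points lie on the sphere, and every homogeneous harmonic polynomial of degree
`1, …, t` sums to zero over `X`. -/
def IsSphericalDesign (n t : ℕ) (r : ℝ) (X : Finset (EuclideanSpace ℝ (Fin n))) : Prop :=
  (∀ x ∈ X, ‖x‖ = r) ∧
  ∀ d : ℕ, 1 ≤ d → d ≤ t → ∀ p : MvPolynomial (Fin n) ℝ,
    p.IsHomogeneous d → mvLaplacian p = 0 →
    ∑ x ∈ X, MvPolynomial.eval (fun i => x i) p = 0

/-! Write `Q_M = quadPoly M` for the polynomial `xᵀ M x`. For symmetric `M`, `N` one has
`Δ Q_M = 2 Tr M` and `Δ (Q_M Q_N) = 2 Tr M · Q_N + 2 Tr N · Q_M + 8 Q_{MN}`, so both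
`n Q_M - Tr M · Q_1` and, for traceless symmetric `H`,
`(n+4)(n+2) Q_H² - 4(n+2) Q_1 Q_{H²} + 2 Tr(H²) Q_1²` are harmonic. Their sums over the design
vanish, and since `Q_1 = r²` on `X` this gives two linear relations between `∑ Q_H²` and
`∑ Q_{H²}`, which determine `∑ Q_H²`. -/

open Matrix

theorem MvPolynomial.IsHomogeneous.smul {σ R : Type*} [CommSemiring R] {φ : MvPolynomial σ R}
    {m : ℕ} (hφ : φ.IsHomogeneous m) (a : R) : (a • φ).IsHomogeneous m := by
  simpa only [smul_eq_C_mul] using hφ.C_mul a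

section QuadraticPolynomials

variable {σ R : Type*} [Fintype σ] [CommSemiring R]

noncomputable def linPoly (a : σ → R) : MvPolynomial σ R :=
  ∑ j, C (a j) * X j

noncomputable def quadPoly (M : Matrix σ σ R) : MvPolynomial σ R :=
  ∑ i, ∑ j, C (M i j) * X i * X j

theorem isHomogeneous_quadPoly (M : Matrix σ σ R) : (quadPoly M).IsHomogeneous 2 :=
  IsHomogeneous.sum _ _ _ fun i _ => IsHomogeneous.sum _ _ _ fun j _ =>
    ((isHomogeneous_X _ i).C_mul _).mul (isHomogeneous_X _ j)

theorem eval_quadPoly (M : Matrix σ σ R) (x : σ → R) : eval x (quadPoly M) = x ⬝ᵥ M *ᵥ x := by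
  simp only [quadPoly, map_sum, eval_mul, eval_C, eval_X, dotProduct, mulVec, Finset.mul_sum]
  exact Finset.sum_congr rfl fun i _ => Finset.sum_congr rfl fun j _ => by ring

theorem quadPoly_smul (a : R) (M : Matrix σ σ R) : quadPoly (a • M) = a • quadPoly M := by
  simp only [quadPoly, Matrix.smul_apply, smul_eq_mul, C_mul, smul_eq_C_mul, Finset.mul_sum,
    mul_assoc]

theorem pderiv_linPoly (a : σ → R) (k : σ) : pderiv k (linPoly a) = C (a k) := by
  classical
  simp [linPoly, pderiv_X, Pi.single_apply]

theorem pderiv_quadPoly (M : Matrix σ σ R) (k : σ) :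
    pderiv k (quadPoly M) = linPoly ((M + Mᵀ) k) := by
  classical
  simp only [quadPoly, linPoly, map_sum, pderiv_mul, pderiv_C, pderiv_X, Pi.single_apply,
    zero_mul, zero_add, mul_ite, mul_one, mul_zero, ite_mul, Finset.sum_add_distrib]
  rw [Finset.sum_comm]
  simp [Finset.sum_add_distrib, add_mul]

theorem sum_linPoly_mul_linPoly (A B : Matrix σ σ R) :
    ∑ k, linPoly (A k) * linPoly (B k) = quadPoly (Aᵀ * B) := by
  simp only [linPoly, quadPoly, mul_apply, transpose_apply, map_sum, Finset.sum_mul,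
    Finset.mul_sum, C_mul]
  rw [Finset.sum_congr rfl fun k _ => Finset.sum_comm, Finset.sum_comm]
  refine Finset.sum_congr rfl fun i _ => ?_
  rw [Finset.sum_comm]
  exact Finset.sum_congr rfl fun j _ => Finset.sum_congr rfl fun k _ => by ring

theorem sum_pderiv_quadPoly_mul_pderiv_quadPoly {M N : Matrix σ σ R} (hM : M.IsSymm)
    (hN : N.IsSymm) :
    ∑ k, pderiv k (quadPoly M) * pderiv k (quadPoly N) = (4 : R) • quadPoly (M * N) := by
  simp only [pderiv_quadPoly, sum_linPoly_mul_linPoly, hM.eq, hN.eq, transpose_add,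
    ← quadPoly_smul]
  congr 1
  rw [← two_smul R M, ← two_smul R N, smul_mul_smul_comm]
  norm_num

end QuadraticPolynomials

section Laplacian

variable {n : ℕ}

theorem mvLaplacian_add (p q : MvPolynomial (Fin n) ℝ) :
    mvLaplacian (p + q) = mvLaplacian p + mvLaplacian q := by
  simp only [mvLaplacian, map_add, Finset.sum_add_distrib]

theorem mvLaplacian_sub (p q : MvPolynomial (Fin n) ℝ) :
    mvLaplacian (p - q) = mvLaplacian p - mvLaplacian q := by
  simp only [mvLaplacian, map_sub, Finset.sum_sub_distrib]

theorem mvLaplacian_smul (a : ℝ) (p : MvPolynomial (Fin n) ℝ) :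
    mvLaplacian (a • p) = a • mvLaplacian p := by
  simp only [mvLaplacian, Derivation.map_smul, Finset.smul_sum]

theorem mvLaplacian_mul (p q : MvPolynomial (Fin n) ℝ) :
    mvLaplacian (p * q) =
      mvLaplacian p * q + 2 * ∑ i, pderiv i p * pderiv i q + p * mvLaplacian q := by
  simp only [mvLaplacian, Finset.sum_mul, Finset.mul_sum, ← Finset.sum_add_distrib]
  refine Finset.sum_congr rfl fun i _ => ?_
  rw [pderiv_mul, map_add, pderiv_mul, pderiv_mul]
  ring

theorem mvLaplacian_quadPoly (M : Matrix (Fin n) (Fin n) ℝ) :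
    mvLaplacian (quadPoly M) = C (2 * M.trace) := by
  simp only [mvLaplacian, pderiv_quadPoly, pderiv_linPoly, ← map_sum, trace, diag,
    Matrix.add_apply, transpose_apply, Finset.sum_add_distrib, two_mul]

theorem mvLaplacian_quadPoly_mul {M N : Matrix (Fin n) (Fin n) ℝ} (hM : M.IsSymm)
    (hN : N.IsSymm) :
    mvLaplacian (quadPoly M * quadPoly N) =
      (2 * M.trace) • quadPoly N + (2 * N.trace) • quadPoly M + (8 : ℝ) • quadPoly (M * N) := by
  rw [mvLaplacian_mul, mvLaplacian_quadPoly, mvLaplacian_quadPoly,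
    sum_pderiv_quadPoly_mul_pderiv_quadPoly hM hN, C_mul', mul_comm (quadPoly M), C_mul',
    two_mul ((4 : ℝ) • quadPoly (M * N))]
  module

end Laplacian

theorem eval_quadPoly_one_eq_norm_sq {n : ℕ} (x : EuclideanSpace ℝ (Fin n)) :
    eval (fun i => x i) (quadPoly (1 : Matrix (Fin n) (Fin n) ℝ)) = ‖x‖ ^ 2 := by
  rw [eval_quadPoly, one_mulVec, ← real_inner_self_eq_norm_sq,
    EuclideanSpace.inner_eq_star_dotProduct, star_trivial]

namespace IsSphericalDesign

variable {n t : ℕ} {r : ℝ} {X : Finset (EuclideanSpace ℝ (Fin n))}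

theorem eval_quadPoly_one (hX : IsSphericalDesign n t r X) {x : EuclideanSpace ℝ (Fin n)}
    (hx : x ∈ X) : eval (fun i => x i) (quadPoly (1 : Matrix (Fin n) (Fin n) ℝ)) = r ^ 2 := by
  rw [eval_quadPoly_one_eq_norm_sq, hX.1 x hx]

theorem mul_sum_quadForm (hX : IsSphericalDesign n t r X) (ht : 2 ≤ t)
    (M : Matrix (Fin n) (Fin n) ℝ) :
    n * ∑ x ∈ X, (fun i => x i) ⬝ᵥ M *ᵥ (fun i => x i) = M.trace * r ^ 2 * X.card := by
  set p : MvPolynomial (Fin n) ℝ := (n : ℝ) • quadPoly M - M.trace • quadPoly 1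
  have hharm : mvLaplacian p = 0 := by
    rw [mvLaplacian_sub, mvLaplacian_smul, mvLaplacian_smul, mvLaplacian_quadPoly,
      mvLaplacian_quadPoly, trace_one, Fintype.card_fin, smul_eq_C_mul, smul_eq_C_mul, ← C_mul,
      ← C_mul, ← C_sub, C_eq_zero]
    ring
  have hhom : p.IsHomogeneous 2 :=
    ((isHomogeneous_quadPoly M).smul _).sub ((isHomogeneous_quadPoly 1).smul _)
  have heval : ∀ x ∈ X, eval (fun i => x i) p =
      n * ((fun i => x i) ⬝ᵥ M *ᵥ (fun i => x i)) - M.trace * r ^ 2 := by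
    intro x hx
    rw [map_sub, smul_eval, smul_eval, eval_quadPoly, hX.eval_quadPoly_one hx]
  have hsum := hX.2 2 one_le_two ht p hhom hharm
  rw [Finset.sum_congr rfl heval, Finset.sum_sub_distrib, ← Finset.mul_sum, Finset.sum_const,
    nsmul_eq_mul] at hsum
  linear_combination hsum

theorem mul_sum_quadForm_sq {H : Matrix (Fin n) (Fin n) ℝ} (hX : IsSphericalDesign n t r X)
    (ht : 4 ≤ t) (hH : H.IsSymm) (htr : H.trace = 0) :
    ((n : ℝ) + 4) * (n + 2) * ∑ x ∈ X, ((fun i => x i) ⬝ᵥ H *ᵥ (fun i => x i)) ^ 2 =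
      4 * (n + 2) * r ^ 2 * ∑ x ∈ X, (fun i => x i) ⬝ᵥ (H * H) *ᵥ (fun i => x i)
        - 2 * (H * H).trace * r ^ 4 * X.card := by
  set p : MvPolynomial (Fin n) ℝ :=
    (((n : ℝ) + 4) * (n + 2)) • (quadPoly H * quadPoly H)
      - (4 * ((n : ℝ) + 2)) • (quadPoly 1 * quadPoly (H * H))
      + (2 * (H * H).trace) • (quadPoly 1 * quadPoly 1)
  have h1 : (1 : Matrix (Fin n) (Fin n) ℝ).IsSymm := isSymm_one
  have hHH : (H * H).IsSymm := by simpa only [hH.eq] using isSymm_transpose_mul_self H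
  have hharm : mvLaplacian p = 0 := by
    rw [mvLaplacian_add, mvLaplacian_sub, mvLaplacian_smul, mvLaplacian_smul, mvLaplacian_smul,
      mvLaplacian_quadPoly_mul hH hH, mvLaplacian_quadPoly_mul h1 hHH,
      mvLaplacian_quadPoly_mul h1 h1, htr, trace_one, Fintype.card_fin, one_mul, one_mul]
    module
  have hhom : p.IsHomogeneous 4 :=
    ((((isHomogeneous_quadPoly _).mul (isHomogeneous_quadPoly _)).smul _).sub
      (((isHomogeneous_quadPoly _).mul (isHomogeneous_quadPoly _)).smul _)).add
      (((isHomogeneous_quadPoly _).mul (isHomogeneous_quadPoly _)).smul _)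
  have heval : ∀ x ∈ X, eval (fun i => x i) p =
      ((n : ℝ) + 4) * (n + 2) * ((fun i => x i) ⬝ᵥ H *ᵥ (fun i => x i)) ^ 2
        - 4 * (n + 2) * r ^ 2 * ((fun i => x i) ⬝ᵥ (H * H) *ᵥ (fun i => x i))
        + 2 * (H * H).trace * r ^ 4 := by
    intro x hx
    rw [map_add, map_sub, smul_eval, smul_eval, smul_eval, eval_mul, eval_mul, eval_mul,
      hX.eval_quadPoly_one hx, eval_quadPoly, eval_quadPoly]
    ring
  have hsum := hX.2 4 (by norm_num) ht p hhom hharm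
  rw [Finset.sum_congr rfl heval, Finset.sum_add_distrib, Finset.sum_sub_distrib,
    ← Finset.mul_sum, ← Finset.mul_sum, Finset.sum_const, nsmul_eq_mul] at hsum
  linear_combination hsum

end IsSphericalDesign

open Matrix in
theorem spherical_four_design_sum_quadform_sq_general {n : ℕ} (r : ℝ)
    (X : Finset (EuclideanSpace ℝ (Fin n))) (hX : IsSphericalDesign n 4 r X)
    (H : Matrix (Fin n) (Fin n) ℝ) (hH : Hᵀ = H) (htr : Matrix.trace H = 0) :
    ∑ x ∈ X, ((fun i => x i) ⬝ᵥ (H *ᵥ (fun i => x i))) ^ 2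
      = 2 * r ^ 4 * X.card / (n * (n + 2)) * Matrix.trace (H * H) := by
  rcases n.eq_zero_or_pos with rfl | hn
  · simp
  have h2 := hX.mul_sum_quadForm (by norm_num) (H * H)
  have h4 := hX.mul_sum_quadForm_sq le_rfl hH htr
  have hn4 : (n : ℝ) + 4 ≠ 0 := by positivity
  rw [div_mul_eq_mul_div, eq_div_iff (by positivity)]
  refine mul_left_cancel₀ hn4 ?_
  linear_combination n * h4 + 4 * (n + 2) * r ^ 2 * h2

open Matrix in
theorem spherical_four_design_sum_quadform_sq {n : ℕ} (hn : 0 < n) (r : ℝ) (hr : 0 < r)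
    (X : Finset (EuclideanSpace ℝ (Fin n))) (hX : IsSphericalDesign n 4 r X)
    (H : Matrix (Fin n) (Fin n) ℝ) (hH : Hᵀ = H) (htr : Matrix.trace H = 0) :
    ∑ x ∈ X, ((fun i => x i) ⬝ᵥ (H *ᵥ (fun i => x i))) ^ 2
      = 2 * r ^ 4 * X.card / (n * (n + 2)) * Matrix.trace (H * H) :=
  spherical_four_design_sum_quadform_sq_general r X hX H hH htr
end

section
/- Let L ⊆ ℝ^n be a full-rank lattice all of whose nonzero shells L(r²) = {x ∈ L : ‖x‖² = r²} form spherical 2-designs. Then for every α > 0 and every symmetric traceless n×n matrix H, the directional derivative of the Gaussian energy at L vanishes: ∑_{x ∈ L \ {0}} (xᵀHx) e^{−α‖x‖²} = 0. -/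
/-!
Group the absolutely convergent sum by shells. On the shell of radius `r` the Gaussian weight
is the constant `exp (-α r²)`, and `x ↦ xᵀ H x` is a homogeneous quadratic polynomial with
Laplacian `2 tr H = 0`, so the 2-design property makes each shell sum of `xᵀ H x` vanish.
-/

open MvPolynomial

open Matrix

namespace Matrix

variable {σ R : Type*} [Fintype σ] [CommRing R]

noncomputable def quadFormPoly (H : Matrix σ σ R) : MvPolynomial σ R :=
  ∑ i, ∑ j, C (H i j) * (X i * X j)

theorem eval_quadFormPoly (H : Matrix σ σ R) (v : σ → R) :
    eval v H.quadFormPoly = v ⬝ᵥ (H *ᵥ v) := by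
  simp only [quadFormPoly, dotProduct, mulVec, map_sum, map_mul, eval_C, eval_X, Finset.mul_sum]
  exact Finset.sum_congr rfl fun i _ => Finset.sum_congr rfl fun j _ => by ring

theorem isHomogeneous_quadFormPoly (H : Matrix σ σ R) : H.quadFormPoly.IsHomogeneous 2 :=
  IsHomogeneous.sum _ _ _ fun _ _ => IsHomogeneous.sum _ _ _ fun _ _ =>
    (isHomogeneous_C _ _).mul ((isHomogeneous_X _ _).mul (isHomogeneous_X _ _))

theorem pderiv_quadFormPoly [DecidableEq σ] (H : Matrix σ σ R) (k : σ) :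
    pderiv k H.quadFormPoly = ∑ j, C (H k j + H j k) * X j := by
  simp only [quadFormPoly, map_sum, Derivation.leibniz, pderiv_X, pderiv_C, smul_eq_mul,
    Pi.single_apply, mul_zero, Finset.sum_const_zero, mul_ite, mul_one, mul_add,
    Finset.sum_add_distrib, Finset.sum_ite_eq', Finset.mem_univ, if_true]
  rw [Finset.sum_comm (f := fun i j => if i = k then _ else _)]
  simp only [Finset.sum_ite_eq', Finset.mem_univ, if_true, zero_add, map_add, add_mul,
    Finset.sum_add_distrib, add_comm]

theorem mvLaplacian_quadFormPoly {n : ℕ} (H : Matrix (Fin n) (Fin n) ℝ) :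
    mvLaplacian H.quadFormPoly = C (2 * H.trace) := by
  simp only [mvLaplacian, pderiv_quadFormPoly, map_sum, Derivation.leibniz, pderiv_X, pderiv_C,
    smul_eq_mul, Pi.single_apply, mul_ite, mul_one, mul_zero, add_zero, Finset.sum_ite_eq',
    Finset.mem_univ, if_true]
  rw [← map_sum, trace, two_mul, ← Finset.sum_add_distrib]
  rfl

end Matrix

theorem IsSphericalDesign.sum_dotProduct_mulVec_eq_zero {n t : ℕ} {r : ℝ}
    {S : Finset (EuclideanSpace ℝ (Fin n))} (hS : IsSphericalDesign n t r S) (ht : 2 ≤ t)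
    {H : Matrix (Fin n) (Fin n) ℝ} (htr : H.trace = 0) :
    ∑ x ∈ S, (fun i => x i) ⬝ᵥ (H *ᵥ fun i => x i) = 0 := by
  have hharmonic : mvLaplacian H.quadFormPoly = 0 := by
    rw [mvLaplacian_quadFormPoly, htr, mul_zero, map_zero]
  simpa only [eval_quadFormPoly] using
    hS.2 2 one_le_two ht _ H.isHomogeneous_quadFormPoly hharmonic

theorem tsum_mul_radial_eq_zero_of_shell_sums_eq_zero {E : Type*} [NormedAddGroup E]
    {P : E → Prop} (q : E → ℝ) (w : ℝ → ℝ)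
    (hsum : Summable fun x : {x // P x ∧ x ≠ 0} => q x * w ‖(x : E)‖)
    (hshell : ∀ r, 0 < r → ∑' x : {x | P x ∧ ‖x‖ = r}, q x = 0) :
    ∑' x : {x // P x ∧ x ≠ 0}, q x * w ‖(x : E)‖ = 0 := by
  have hfiber (r : ℝ) :
      ∑' x : (fun x : {x // P x ∧ x ≠ 0} => ‖(x : E)‖) ⁻¹' {r}, q x * w ‖(x : E)‖ = 0 :=
    calc _ = ∑' x : {x | (P x ∧ x ≠ 0) ∧ ‖x‖ = r}, q x * w ‖(x : E)‖ :=
          (Equiv.subtypeSubtypeEquivSubtypeInter (fun x => P x ∧ x ≠ 0) (‖·‖ = r)).tsum_eq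
            fun x => q x.1 * w ‖x.1‖
      _ = ∑' x : {x | (P x ∧ x ≠ 0) ∧ ‖x‖ = r}, q x * w r := tsum_congr fun x => by rw [x.2.2]
      _ = (∑' x : {x | (P x ∧ x ≠ 0) ∧ ‖x‖ = r}, q x) * w r := tsum_mul_right
      _ = 0 := by
        rcases le_or_gt r 0 with hr | hr
        · have hempty : {x | (P x ∧ x ≠ 0) ∧ ‖x‖ = r} = ∅ :=
            Set.eq_empty_of_forall_notMem fun x hx => hx.1.2 (norm_le_zero_iff.mp (hx.2 ▸ hr))
          rw [tsum_congr_set_coe q hempty, tsum_empty, zero_mul]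
        · have hshell_eq : {x | (P x ∧ x ≠ 0) ∧ ‖x‖ = r} = {x | P x ∧ ‖x‖ = r} :=
            Set.ext fun x => ⟨fun hx => ⟨hx.1.1, hx.2⟩,
              fun hx => ⟨⟨hx.1, norm_pos_iff.mp (hx.2 ▸ hr)⟩, hx.2⟩⟩
          rw [tsum_congr_set_coe q hshell_eq, hshell r hr, zero_mul]
  simpa only [hfiber, tsum_zero] using (hsum.hasSum.tsum_fiberwise fun x => ‖(x : E)‖).tsum_eq.symm

open Matrix in
theorem gradient_vanishes_of_shells_two_designs_general {n : ℕ}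
    (L : Submodule ℤ (EuclideanSpace ℝ (Fin n)))
    (hfin : ∀ r : ℝ, {x : EuclideanSpace ℝ (Fin n) | x ∈ L ∧ ‖x‖ = r}.Finite)
    (hdesign : ∀ r : ℝ, 0 < r → IsSphericalDesign n 2 r (hfin r).toFinset)
    (α : ℝ) (H : Matrix (Fin n) (Fin n) ℝ)
    (htr : Matrix.trace H = 0)
    (hsum : Summable fun x : {x : EuclideanSpace ℝ (Fin n) // x ∈ L ∧ x ≠ 0} =>
      |(fun i => (x : EuclideanSpace ℝ (Fin n)) i) ⬝ᵥ
          (H *ᵥ fun i => (x : EuclideanSpace ℝ (Fin n)) i)| *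
        Real.exp (-α * ‖(x : EuclideanSpace ℝ (Fin n))‖ ^ 2)) :
    ∑' x : {x : EuclideanSpace ℝ (Fin n) // x ∈ L ∧ x ≠ 0},
      ((fun i => (x : EuclideanSpace ℝ (Fin n)) i) ⬝ᵥ
          (H *ᵥ fun i => (x : EuclideanSpace ℝ (Fin n)) i)) *
        Real.exp (-α * ‖(x : EuclideanSpace ℝ (Fin n))‖ ^ 2) = 0 := by
  refine tsum_mul_radial_eq_zero_of_shell_sums_eq_zero (P := (· ∈ L))
    (fun x => (fun i => x i) ⬝ᵥ (H *ᵥ fun i => x i)) (fun r => Real.exp (-α * r ^ 2)) ?_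
    fun r hr => ?_
  · exact summable_abs_iff.mp (by simpa only [abs_mul, Real.abs_exp] using hsum)
  · rw [← (hfin r).coe_toFinset]
    exact (Finset.tsum_subtype' _ _).trans
      ((hdesign r hr).sum_dotProduct_mulVec_eq_zero le_rfl htr)

open Matrix in
theorem gradient_vanishes_of_shells_two_designs {n : ℕ} (hn : 0 < n)
    (L : Submodule ℤ (EuclideanSpace ℝ (Fin n))) (hdisc : DiscreteTopology L)
    (hspan : Submodule.span ℝ (L : Set (EuclideanSpace ℝ (Fin n))) = ⊤)
    (hfin : ∀ r : ℝ, {x : EuclideanSpace ℝ (Fin n) | x ∈ L ∧ ‖x‖ = r}.Finite)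
    (hdesign : ∀ r : ℝ, 0 < r → IsSphericalDesign n 2 r (hfin r).toFinset)
    (α : ℝ) (hα : 0 < α) (H : Matrix (Fin n) (Fin n) ℝ) (hH : Hᵀ = H)
    (htr : Matrix.trace H = 0)
    (hsum : Summable fun x : {x : EuclideanSpace ℝ (Fin n) // x ∈ L ∧ x ≠ 0} =>
      |(fun i => (x : EuclideanSpace ℝ (Fin n)) i) ⬝ᵥ
          (H *ᵥ fun i => (x : EuclideanSpace ℝ (Fin n)) i)| *
        Real.exp (-α * ‖(x : EuclideanSpace ℝ (Fin n))‖ ^ 2)) :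
    ∑' x : {x : EuclideanSpace ℝ (Fin n) // x ∈ L ∧ x ≠ 0},
      ((fun i => (x : EuclideanSpace ℝ (Fin n)) i) ⬝ᵥ
          (H *ᵥ fun i => (x : EuclideanSpace ℝ (Fin n)) i)) *
        Real.exp (-α * ‖(x : EuclideanSpace ℝ (Fin n))‖ ^ 2) = 0 :=
  gradient_vanishes_of_shells_two_designs_general L hfin hdesign α H htr hsum
end

section
/- Let R = D_n (n ≥ 4) and let H = M(e_i − e_j, e_i + e_j) = (e_i−e_j)(e_i+e_j)ᵀ + (e_i+e_j)(e_i−e_j)ᵀ for some i < j. Then ∑_{x ∈ R} (xᵀHx)² = 32(n−2), while Tr(H²) = 8; hence H is an eigenvector of the quadratic form Q[H] = ∑_{x∈R}(xᵀHx)² with eigenvalue 4(n−2). -/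
/-!
On a root `x = ±e_k ± e_l` (`k < l`) the form is `xᵀHx = 2 (x_i² - x_j²) = 2 (c_k + c_l)` with
`c = e_i - e_j`, independently of the signs, so `Q[H] = 16 ∑_{k<l} (c_k + c_l)²`. By symmetry,
`2 ∑_{k<l} (c_k + c_l)² = ∑_{k,l} (c_k + c_l)² - 4 ∑ c² = 2n ∑ c² + 2 (∑ c)² - 4 ∑ c² = 4n - 8`,
as `∑ c = 0` and `∑ c² = 2`. For the trace, `tr((uvᵀ + vuᵀ)²) = 2 ((u ⬝ v)² + |u|² |v|²)` with
`u ⬝ v = 0` and `|u|² = |v|² = 2`.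
-/

open Matrix
open scoped Classical

/-- The root system `Dₙ = {±eᵢ ± eⱼ : i < j} ⊆ ℝ^n`. -/
noncomputable def DRoots (n : ℕ) : Finset (Fin n → ℝ) :=
  Finset.image (fun q : Fin n × Fin n × Bool × Bool =>
      ((if q.2.2.1 then (1 : ℝ) else -1) • (Pi.single q.1 (1 : ℝ) : Fin n → ℝ)
        + (if q.2.2.2 then (1 : ℝ) else -1) • (Pi.single q.2.1 (1 : ℝ) : Fin n → ℝ)))
    (Finset.univ.filter fun q => q.1 ≠ q.2.1)

open Finset

def boolSign (b : Bool) : ℝ := if b then 1 else -1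

lemma boolSign_sq (b : Bool) : boolSign b ^ 2 = 1 := by cases b <;> norm_num [boolSign]

lemma boolSign_ne_zero (b : Bool) : boolSign b ≠ 0 := by cases b <;> norm_num [boolSign]

lemma boolSign_injective : Function.Injective boolSign := by
  intro b b'; cases b <;> cases b' <;> norm_num [boolSign]

section SignedPair

variable {ι : Type*} [DecidableEq ι]

noncomputable def signedPair (k l : ι) (s t : Bool) : ι → ℝ :=
  boolSign s • Pi.single k 1 + boolSign t • Pi.single l 1

lemma signedPair_apply_left {k l : ι} (hkl : k ≠ l) (s t : Bool) :
    signedPair k l s t k = boolSign s := by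
  simp [signedPair, hkl]

lemma signedPair_apply_right {k l : ι} (hkl : k ≠ l) (s t : Bool) :
    signedPair k l s t l = boolSign t := by
  simp [signedPair, hkl.symm]

lemma signedPair_apply_of_ne {k l a : ι} (hk : a ≠ k) (hl : a ≠ l) (s t : Bool) :
    signedPair k l s t a = 0 := by
  simp [signedPair, hk, hl]

lemma signedPair_apply_ne_zero_iff {k l : ι} (hkl : k ≠ l) (s t : Bool) (a : ι) :
    signedPair k l s t a ≠ 0 ↔ a = k ∨ a = l := by
  by_cases hk : a = k
  · subst hk; simp [signedPair_apply_left hkl, boolSign_ne_zero]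
  by_cases hl : a = l
  · subst hl; simp [signedPair_apply_right hkl, boolSign_ne_zero]
  simp [signedPair_apply_of_ne hk hl, hk, hl]

lemma signedPair_sq_apply {k l : ι} (hkl : k ≠ l) (s t : Bool) (a : ι) :
    signedPair k l s t a ^ 2 = (Pi.single k 1 : ι → ℝ) a + (Pi.single l 1 : ι → ℝ) a := by
  by_cases hk : a = k
  · subst hk; simp [signedPair_apply_left hkl, boolSign_sq, hkl]
  by_cases hl : a = l
  · subst hl; simp [signedPair_apply_right hkl, boolSign_sq, hkl.symm]
  simp [signedPair_apply_of_ne hk hl, hk, hl]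

lemma signedPair_swap (k l : ι) (s t : Bool) : signedPair l k t s = signedPair k l s t :=
  add_comm _ _

lemma signedPair_inj [LinearOrder ι] {k l k' l' : ι} (hkl : k < l) (hkl' : k' < l')
    {s t s' t' : Bool} (h : signedPair k l s t = signedPair k' l' s' t') :
    k = k' ∧ l = l' ∧ s = s' ∧ t = t' := by
  have hsupp : ∀ a, a = k ∨ a = l ↔ a = k' ∨ a = l' := fun a => by
    rw [← signedPair_apply_ne_zero_iff hkl.ne s t, ← signedPair_apply_ne_zero_iff hkl'.ne s' t', h]
  have hk : k = k' := by
    have := hsupp k; have := hsupp l; have := hsupp k'; have := hsupp l'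
    grind
  have hl : l = l' := by
    have := hsupp l; have := hsupp l'
    grind
  subst hk hl
  refine ⟨rfl, rfl, boolSign_injective ?_, boolSign_injective ?_⟩
  · rw [← signedPair_apply_left hkl.ne s t, h, signedPair_apply_left hkl.ne]
  · rw [← signedPair_apply_right hkl.ne s t, h, signedPair_apply_right hkl.ne]

end SignedPair

-- `DRoots` lists every root twice, as `(k, l, s, t)` and `(l, k, t, s)`; `k < l` keeps one.
lemma sum_DRoots {M : Type*} [AddCommMonoid M] (n : ℕ) (F : (Fin n → ℝ) → M) :
    ∑ x ∈ DRoots n, F x = ∑ k, ∑ l with k < l, ∑ s, ∑ t, F (signedPair k l s t) := by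
  have himage : DRoots n = image (fun q : Fin n × Fin n × Bool × Bool =>
      signedPair q.1 q.2.1 q.2.2.1 q.2.2.2) (univ.filter fun q => q.1 < q.2.1) := by
    ext x
    simp only [DRoots, mem_image, mem_filter, mem_univ, true_and, Prod.exists]
    constructor
    · rintro ⟨k, l, s, t, hkl, rfl⟩
      rcases hkl.lt_or_gt with h | h
      · exact ⟨k, l, s, t, h, rfl⟩
      · exact ⟨l, k, t, s, h, signedPair_swap k l s t⟩
    · rintro ⟨k, l, s, t, hkl, rfl⟩
      exact ⟨k, l, s, t, hkl.ne, rfl⟩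
  rw [himage, sum_image]
  · simp only [sum_filter, Fintype.sum_prod_type, sum_ite_irrel, sum_const_zero]
  · rintro ⟨k, l, s, t⟩ hq ⟨k', l', s', t'⟩ hq' h
    simp only [coe_filter, mem_univ, true_and, Set.mem_ofPred_eq] at hq hq'
    obtain ⟨rfl, rfl, rfl, rfl⟩ := signedPair_inj hq hq' h
    rfl

lemma sum_sum_eq_two_nsmul_sum_lt_add_sum_diag {ι M : Type*} [LinearOrder ι] [Fintype ι]
    [AddCommMonoid M] (f : ι → ι → M) (hf : ∀ k l, f k l = f l k) :
    ∑ k, ∑ l, f k l = 2 • ∑ k, ∑ l with k < l, f k l + ∑ k, f k k := by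
  have hsplit : ∀ k l, f k l = ((if k < l then f k l else 0) + (if l < k then f k l else 0))
      + (if k = l then f k l else 0) := fun k l => by
    rcases lt_trichotomy k l with h | rfl | h
    · simp [h, h.not_gt, h.ne]
    · simp
    · simp [h, h.not_gt, h.ne']
  have hswap : ∑ k, ∑ l, (if l < k then f k l else 0) = ∑ k, ∑ l, (if k < l then f k l else 0) := by
    rw [sum_comm]
    simp_rw [hf]
  calc ∑ k, ∑ l, f k l
      = ∑ k, ∑ l, (((if k < l then f k l else 0) + (if l < k then f k l else 0))
          + (if k = l then f k l else 0)) := by simp only [← hsplit]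
    _ = 2 • ∑ k, ∑ l with k < l, f k l + ∑ k, f k k := by
      simp only [sum_add_distrib, hswap, sum_filter, sum_ite_eq, mem_univ, if_true, two_nsmul]

lemma sum_sum_add_sq {ι R : Type*} [Fintype ι] [CommRing R] (c : ι → R) :
    ∑ k, ∑ l, (c k + c l) ^ 2 = 2 * Fintype.card ι * ∑ k, c k ^ 2 + 2 * (∑ k, c k) ^ 2 := by
  simp only [add_sq, sum_add_distrib, sum_const, card_univ, nsmul_eq_mul, ← mul_sum, ← sum_mul]
  ring

lemma dotProduct_mulVec_vecMulVec_add_vecMulVec {ι R : Type*} [Fintype ι] [CommRing R]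
    (u v x : ι → R) :
    x ⬝ᵥ ((vecMulVec u v + vecMulVec v u) *ᵥ x) = 2 * (u ⬝ᵥ x) * (v ⬝ᵥ x) := by
  simp only [add_mulVec, vecMulVec_mulVec, op_smul_eq_smul, dotProduct_add, dotProduct_smul,
    smul_eq_mul, dotProduct_comm x u, dotProduct_comm x v]
  ring

lemma trace_vecMulVec_add_vecMulVec_sq {ι R : Type*} [Fintype ι] [CommRing R] (u v : ι → R) :
    trace ((vecMulVec u v + vecMulVec v u) * (vecMulVec u v + vecMulVec v u))
      = 2 * ((u ⬝ᵥ v) ^ 2 + (u ⬝ᵥ u) * (v ⬝ᵥ v)) := by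
  simp only [add_mul, mul_add, vecMulVec_mul_vecMulVec, trace_add, trace_vecMulVec,
    dotProduct_smul, smul_eq_mul, dotProduct_comm v u]
  ring

lemma sum_DRoots_sq_sub_sq {n : ℕ} {i j : Fin n} (hij : i ≠ j) :
    ∑ x ∈ DRoots n, (x i ^ 2 - x j ^ 2) ^ 2 = 8 * ((n : ℝ) - 2) := by
  set c : Fin n → ℝ := Pi.single i 1 - Pi.single j 1
  have hterm : ∀ k l, k < l → ∀ s t,
      (signedPair k l s t i ^ 2 - signedPair k l s t j ^ 2) ^ 2 = (c k + c l) ^ 2 := by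
    intro k l hkl s t
    simp only [signedPair_sq_apply hkl.ne, c, Pi.sub_apply, Pi.single_comm i, Pi.single_comm j]
    ring
  have hc_sum : ∑ k, c k = 0 := by simp [c, sum_sub_distrib]
  have hc_sq : ∑ k, c k ^ 2 = 2 := by
    simp [c, sub_sq, sum_add_distrib, sum_sub_distrib, Pi.single_apply, hij.symm]
    norm_num
  have hdiag : ∑ k, (c k + c k) ^ 2 = 8 := by
    simp_rw [← two_mul, mul_pow, ← mul_sum, hc_sq]
    norm_num
  have hpairs := sum_sum_eq_two_nsmul_sum_lt_add_sum_diag (fun k l => (c k + c l) ^ 2)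
    (fun k l => by ring)
  rw [sum_sum_add_sq, hc_sum, hc_sq, hdiag, Fintype.card_fin, two_nsmul] at hpairs
  calc ∑ x ∈ DRoots n, (x i ^ 2 - x j ^ 2) ^ 2
      = ∑ k, ∑ l with k < l, 4 * (c k + c l) ^ 2 := by
        rw [sum_DRoots]
        refine sum_congr rfl fun k _ => sum_congr rfl fun l hl => ?_
        simp only [hterm k l (mem_filter.1 hl).2, Fintype.sum_bool]
        ring
    _ = 8 * ((n : ℝ) - 2) := by
        simp only [← mul_sum]
        linarith

theorem DRoots_eigenvalue_M_general {n : ℕ} (i j : Fin n) (hij : i < j) :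
    let H : Matrix (Fin n) (Fin n) ℝ :=
      Matrix.vecMulVec (Pi.single i 1 - Pi.single j 1) (Pi.single i 1 + Pi.single j 1)
        + Matrix.vecMulVec (Pi.single i 1 + Pi.single j 1) (Pi.single i 1 - Pi.single j 1)
    (∑ x ∈ DRoots n, (x ⬝ᵥ (H *ᵥ x)) ^ 2 = 32 * ((n : ℝ) - 2)) ∧
      Matrix.trace (H * H) = 8 ∧
      ∑ x ∈ DRoots n, (x ⬝ᵥ (H *ᵥ x)) ^ 2 = 4 * ((n : ℝ) - 2) * Matrix.trace (H * H) := by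
  intro H
  have hquad : ∀ x : Fin n → ℝ, x ⬝ᵥ (H *ᵥ x) = 2 * (x i ^ 2 - x j ^ 2) := fun x => by
    simp only [H, dotProduct_mulVec_vecMulVec_add_vecMulVec, sub_dotProduct, add_dotProduct,
      single_dotProduct, one_mul]
    ring
  have hsum : ∑ x ∈ DRoots n, (x ⬝ᵥ (H *ᵥ x)) ^ 2 = 32 * ((n : ℝ) - 2) := by
    simp only [hquad, mul_pow, ← mul_sum, sum_DRoots_sq_sub_sq hij.ne]
    ring
  have htrace : trace (H * H) = 8 := by
    simp only [H, trace_vecMulVec_add_vecMulVec_sq, sub_dotProduct, add_dotProduct,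
      single_dotProduct, one_mul, Pi.sub_apply, Pi.add_apply, Pi.single_eq_same,
      Pi.single_eq_of_ne hij.ne, Pi.single_eq_of_ne hij.ne']
    norm_num
  exact ⟨hsum, htrace, by rw [hsum, htrace]; ring⟩

theorem DRoots_eigenvalue_M {n : ℕ} (hn : 4 ≤ n) (i j : Fin n) (hij : i < j) :
    let H : Matrix (Fin n) (Fin n) ℝ :=
      Matrix.vecMulVec (Pi.single i 1 - Pi.single j 1) (Pi.single i 1 + Pi.single j 1)
        + Matrix.vecMulVec (Pi.single i 1 + Pi.single j 1) (Pi.single i 1 - Pi.single j 1)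
    (∑ x ∈ DRoots n, (x ⬝ᵥ (H *ᵥ x)) ^ 2 = 32 * ((n : ℝ) - 2)) ∧
      Matrix.trace (H * H) = 8 ∧
      ∑ x ∈ DRoots n, (x ⬝ᵥ (H *ᵥ x)) ^ 2 = 4 * ((n : ℝ) - 2) * Matrix.trace (H * H) :=
  DRoots_eigenvalue_M_general i j hij
end

section
/- Let P_i = ∑_{j ≠ i} M(e_i − e_j) − 2Iₙ for i = 1,…,n+1, where M(v) = vvᵀ and A_n is regarded as a rank-n root system. Then ∑_{i=1}^{n+1} P_i = 0 and P_1, …, P_n are linearly independent; hence the span of {P_1,…,P_{n+1}} has dimension n. -/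
open Matrix
open scoped Classical

/-- The root system `Aₙ = {±(eᵢ − eⱼ) : i ≠ j} ⊆ ℝ^{n+1}`. -/
noncomputable def ARoots (n : ℕ) : Finset (Fin (n + 1) → ℝ) :=
  Finset.image (fun p : Fin (n + 1) × Fin (n + 1) =>
      Pi.single p.1 (1 : ℝ) - Pi.single p.2 1)
    (Finset.univ.filter fun p => p.1 ≠ p.2)

/-- Orthogonal projection of `ℝ^{n+1}` onto the hyperplane `{v : ∑ vᵢ = 0}`
(the identity on the span of the root system `Aₙ`). -/
noncomputable def projA (n : ℕ) : Matrix (Fin (n + 1)) (Fin (n + 1)) ℝ :=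
  1 - ((n : ℝ) + 1)⁻¹ • Matrix.of fun _ _ => (1 : ℝ)

/-- `Pᵢ = ∑_{j ≠ i} (eᵢ − eⱼ)(eᵢ − eⱼ)ᵀ − 2·Iₙ`, where `Iₙ` is the identity on
the span of `Aₙ`. -/
noncomputable def PA (n : ℕ) (i : Fin (n + 1)) : Matrix (Fin (n + 1)) (Fin (n + 1)) ℝ :=
  (∑ j ∈ Finset.univ.erase i,
      Matrix.vecMulVec (Pi.single i 1 - Pi.single j 1) (Pi.single i 1 - Pi.single j 1))
    - (2 : ℝ) • projA n

/-!
Entrywise, with `c = 2 / (n + 1)`,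
`P_i a b = (n + 1) δ_{ai} δ_{bi} - δ_{ai} - δ_{bi} - δ_{ab} + c`, and these entries sum to zero
over `i`. If `∑_{k ≠ last} g_k P_k = 0`, the `(last, last)` entry reads `(c - 1) ∑ g_k = 0`,
so `∑ g_k = 0` because `n ≠ 1`; the `(k, last)` entry then reads `-g_k + c ∑ g_k = 0`.
Finally `P_last = -∑_{k ≠ last} P_k`, so all `P_i` span the same space as the independent ones.
-/

theorem sum_vecMulVec_single_sub_single_apply {ι R : Type*} [Fintype ι] [DecidableEq ι]
    [CommRing R] (i a b : ι) :
    (∑ j, vecMulVec (Pi.single i 1 - Pi.single j 1 : ι → R) (Pi.single i 1 - Pi.single j 1)) a b =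
      Fintype.card ι * (if a = i then 1 else 0) * (if b = i then 1 else 0)
        - (if a = i then 1 else 0) - (if b = i then 1 else 0) + (if a = b then 1 else 0) := by
  simp only [Matrix.sum_apply, vecMulVec_apply, Pi.sub_apply, Pi.single_apply, mul_sub,
    mul_ite, mul_one, mul_zero, Finset.sum_sub_distrib, Finset.sum_ite_irrel, Finset.sum_const,
    Finset.card_univ, nsmul_eq_mul, Finset.sum_ite_eq, Finset.mem_univ, ↓reduceIte]
  split_ifs <;> ring

theorem PA_apply (n : ℕ) (i a b : Fin (n + 1)) :
    PA n i a b = ((n : ℝ) + 1) * (if a = i then 1 else 0) * (if b = i then 1 else 0)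
      - (if a = i then 1 else 0) - (if b = i then 1 else 0) - (if a = b then 1 else 0)
      + 2 / ((n : ℝ) + 1) := by
  rw [PA, Finset.sum_erase _ (by simp), Matrix.sub_apply, sum_vecMulVec_single_sub_single_apply]
  simp only [Fintype.card_fin, Nat.cast_add, Nat.cast_one, mul_ite, mul_one, mul_zero, projA,
    smul_of, Matrix.smul_apply, Matrix.sub_apply, one_apply, of_apply, Pi.smul_apply, smul_eq_mul,
    div_eq_mul_inv]
  ring

theorem sum_PA_eq_zero (n : ℕ) : ∑ i, PA n i = 0 := by
  ext a b
  simp only [Matrix.sum_apply, PA_apply, mul_ite, mul_one, mul_zero, Finset.sum_add_distrib,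
    Finset.sum_sub_distrib, Finset.sum_ite_eq, Finset.mem_univ, ↓reduceIte, Finset.sum_ite_irrel,
    Finset.sum_const, Finset.card_univ, Fintype.card_fin, nsmul_eq_mul, Nat.cast_add, Nat.cast_one,
    Matrix.zero_apply]
  field_simp
  ring

theorem linearIndependent_PA_castSucc {n : ℕ} (hn : 2 ≤ n) :
    LinearIndependent ℝ (fun i : Fin n => PA n i.castSucc) := by
  rw [Fintype.linearIndependent_iff]
  intro g hg
  have entry (a b : Fin (n + 1)) : ∑ k, g k * PA n k.castSucc a b = 0 := by
    simpa [Matrix.sum_apply] using congrFun (congrFun hg a) b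
  have hlast (k : Fin n) : Fin.last n ≠ k.castSucc := (Fin.castSucc_ne_last k).symm
  have hc : 2 / ((n : ℝ) + 1) < 1 := (div_lt_one (by positivity)).2 (by norm_cast; omega)
  have hsum : ∑ k, g k = 0 := by
    have h := entry (Fin.last n) (Fin.last n)
    simp only [PA_apply, hlast, if_false, if_true, mul_zero, sub_zero, zero_sub] at h
    rw [← Finset.sum_mul, mul_eq_zero] at h
    exact h.resolve_right (by linarith)
  intro m
  have h := entry m.castSucc (Fin.last n)
  simpa [PA_apply, hlast, Fin.castSucc_ne_last, mul_add, Finset.sum_add_distrib,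
    ← Finset.sum_mul, hsum] using h

theorem Submodule.span_range_eq_span_range_castSucc_of_sum_eq_zero {R M : Type*} [Ring R]
    [AddCommGroup M] [Module R M] {n : ℕ} {v : Fin (n + 1) → M} (hv : ∑ i, v i = 0) :
    span R (Set.range v) = span R (Set.range (v ∘ Fin.castSucc)) := by
  refine le_antisymm (span_le.2 ?_) (span_mono (Set.range_comp_subset_range _ _))
  rintro _ ⟨i, rfl⟩
  induction i using Fin.lastCases with
  | last =>
    rw [Fin.sum_univ_castSucc] at hv
    rw [eq_neg_of_add_eq_zero_right hv]
    exact neg_mem (sum_mem fun i _ => subset_span ⟨i, rfl⟩)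
  | cast i => exact subset_span ⟨i, rfl⟩

theorem PA_sum_zero_and_linearIndependent {n : ℕ} (hn : 2 ≤ n) :
    (∑ i, PA n i = 0) ∧
      LinearIndependent ℝ (fun i : Fin n => PA n i.castSucc) ∧
      Module.finrank ℝ (Submodule.span ℝ (Set.range (PA n))) = n := by
  have hli := linearIndependent_PA_castSucc hn
  refine ⟨sum_PA_eq_zero n, hli, ?_⟩
  rw [Submodule.span_range_eq_span_range_castSucc_of_sum_eq_zero (sum_PA_eq_zero n)]
  exact (finrank_span_eq_card hli).trans (Fintype.card_fin n)
end
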